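/- arXiv:2506.22526 — 3 statements merged into one kernel-verified Lean document; each statement's English description precedes it below -/
import Mathlib

section
/- Let p ∈ (0,1] and let g₁, g₂ be independent random variables on ℕ, each distributed according to the geometric distribution with parameter p (i.e., P(gⱼ = k) = p·(1−p)^k for k ∈ ℕ). Then for every integer k ∈ ℤ, the difference z = g₁ − g₂ satisfies P(z = k) = (p/(2−p))·(1−p)^{|k|}. -/
/-! Splitting `{g₁ - g₂ = a}` according to the value `m` of `g₂` and using independence gives
`P(g₁ - g₂ = a) = ∑ₘ p(1-p)^(m+a) · p(1-p)^m = p²(1-p)^a / (1 - (1-p)²) = p/(2-p) · (1-p)^a`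
for `a ≥ 0`; negative values follow by exchanging `g₁` and `g₂`. -/

open MeasureTheory ProbabilityTheory

theorem hasSum_pow_add_mul_pow {r : ℝ} (hr : |r| < 1) (a : ℕ) :
    HasSum (fun m : ℕ => r ^ (m + a) * r ^ m) (r ^ a / (1 - r ^ 2)) := by
  have hr2 : |r ^ 2| < 1 := by rwa [abs_pow, sq_lt_one_iff_abs_lt_one, abs_abs]
  have hterm : (fun m : ℕ => r ^ (m + a) * r ^ m) = fun m => r ^ a * (r ^ 2) ^ m :=
    funext fun m => by ring
  rw [hterm, div_eq_mul_inv]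
  exact (hasSum_geometric_of_abs_lt_one hr2).mul_left (r ^ a)

section Difference

variable {Ω : Type*} {g₁ g₂ : Ω → ℕ}

theorem setOf_natCast_sub_natCast_eq (a : ℕ) :
    {ω | (g₁ ω : ℤ) - g₂ ω = a} = ⋃ m : ℕ, g₁ ⁻¹' {m + a} ∩ g₂ ⁻¹' {m} := by
  ext ω
  simp only [Set.mem_ofPred_eq, Set.mem_iUnion, Set.mem_inter_iff, Set.mem_preimage,
    Set.mem_singleton_iff]
  constructor
  · intro h
    exact ⟨g₂ ω, by omega, rfl⟩
  · rintro ⟨m, h₁, h₂⟩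
    omega

variable [MeasurableSpace Ω] {μ : Measure Ω}

theorem ProbabilityTheory.IndepFun.measure_natCast_sub_natCast_eq
    (hg₁ : Measurable g₁) (hg₂ : Measurable g₂) (hindep : IndepFun g₁ g₂ μ) (a : ℕ) :
    μ {ω | (g₁ ω : ℤ) - g₂ ω = a} = ∑' m : ℕ, μ {ω | g₁ ω = m + a} * μ {ω | g₂ ω = m} := by
  rw [setOf_natCast_sub_natCast_eq, measure_iUnion]
  · exact tsum_congr fun m => hindep.measure_inter_preimage_eq_mul _ _
      (measurableSet_singleton _) (measurableSet_singleton _)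
  · exact fun i j hij => Set.disjoint_left.2 fun ω h h' => hij (h.2.symm.trans h'.2)
  · exact fun m => (hg₁ (measurableSet_singleton _)).inter (hg₂ (measurableSet_singleton _))

theorem ProbabilityTheory.IndepFun.measure_natCast_sub_natCast_eq_of_geometric
    {p : ℝ} (hp : p ∈ Set.Ioc (0 : ℝ) 1)
    (hg₁ : Measurable g₁) (hg₂ : Measurable g₂) (hindep : IndepFun g₁ g₂ μ)
    (hdist₁ : ∀ k : ℕ, μ {ω | g₁ ω = k} = ENNReal.ofReal (p * (1 - p) ^ k))
    (hdist₂ : ∀ k : ℕ, μ {ω | g₂ ω = k} = ENNReal.ofReal (p * (1 - p) ^ k)) (a : ℕ) :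
    μ {ω | (g₁ ω : ℤ) - g₂ ω = a} = ENNReal.ofReal (p / (2 - p) * (1 - p) ^ a) := by
  obtain ⟨hp0, hp1⟩ := hp
  have hq0 : 0 ≤ 1 - p := by linarith
  have hgeom (k : ℕ) : 0 ≤ p * (1 - p) ^ k := mul_nonneg hp0.le (pow_nonneg hq0 k)
  have hq : |1 - p| < 1 := abs_lt.2 ⟨by linarith, by linarith⟩
  have hsum := (hasSum_pow_add_mul_pow hq a).mul_left (p ^ 2)
  calc μ {ω | (g₁ ω : ℤ) - g₂ ω = a}
      = ∑' m : ℕ, ENNReal.ofReal (p ^ 2 * ((1 - p) ^ (m + a) * (1 - p) ^ m)) := by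
        rw [hindep.measure_natCast_sub_natCast_eq hg₁ hg₂]
        refine tsum_congr fun m => ?_
        rw [hdist₁, hdist₂, ← ENNReal.ofReal_mul (hgeom _)]
        ring_nf
    _ = ENNReal.ofReal (p ^ 2 * ((1 - p) ^ a / (1 - (1 - p) ^ 2))) := by
        rw [← ENNReal.ofReal_tsum_of_nonneg (fun m => by positivity) hsum.summable, hsum.tsum_eq]
    _ = ENNReal.ofReal (p / (2 - p) * (1 - p) ^ a) := by
        have h2p : 2 - p ≠ 0 := by linarith
        rw [show 1 - (1 - p) ^ 2 = p * (2 - p) by ring]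
        field_simp

end Difference

theorem dg_of_diff_of_geometric_general
    {Ω : Type*} [MeasurableSpace Ω] (μ : Measure Ω)
    (p : ℝ) (hp : p ∈ Set.Ioc (0 : ℝ) 1)
    (g₁ g₂ : Ω → ℕ) (hg₁ : Measurable g₁) (hg₂ : Measurable g₂)
    (hindep : IndepFun g₁ g₂ μ)
    (hdist₁ : ∀ k : ℕ, μ {ω | g₁ ω = k} = ENNReal.ofReal (p * (1 - p) ^ k))
    (hdist₂ : ∀ k : ℕ, μ {ω | g₂ ω = k} = ENNReal.ofReal (p * (1 - p) ^ k))
    (k : ℤ) :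
    μ {ω | (g₁ ω : ℤ) - (g₂ ω : ℤ) = k} =
      ENNReal.ofReal ((p / (2 - p)) * (1 - p) ^ k.natAbs) := by
  obtain ⟨n, rfl | rfl⟩ := k.eq_nat_or_neg
  · exact hindep.measure_natCast_sub_natCast_eq_of_geometric hp hg₁ hg₂ hdist₁ hdist₂ n
  · have hswap : {ω | (g₁ ω : ℤ) - g₂ ω = -n} = {ω | (g₂ ω : ℤ) - g₁ ω = n} := by
      ext ω
      simp only [Set.mem_ofPred_eq]
      omega
    rw [hswap, Int.natAbs_neg, Int.natAbs_natCast]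
    exact hindep.symm.measure_natCast_sub_natCast_eq_of_geometric hp hg₂ hg₁ hdist₂ hdist₁ n

/-- If `g₁, g₂` are independent geometric random variables with parameter `p ∈ (0,1]`,
then their difference is double-geometrically distributed. -/
theorem dg_of_diff_of_geometric
    {Ω : Type*} [MeasurableSpace Ω] (μ : Measure Ω) [IsProbabilityMeasure μ]
    (p : ℝ) (hp : p ∈ Set.Ioc (0 : ℝ) 1)
    (g₁ g₂ : Ω → ℕ) (hg₁ : Measurable g₁) (hg₂ : Measurable g₂)
    (hindep : IndepFun g₁ g₂ μ)
    (hdist₁ : ∀ k : ℕ, μ {ω | g₁ ω = k} = ENNReal.ofReal (p * (1 - p) ^ k))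
    (hdist₂ : ∀ k : ℕ, μ {ω | g₂ ω = k} = ENNReal.ofReal (p * (1 - p) ^ k))
    (k : ℤ) :
    μ {ω | (g₁ ω : ℤ) - (g₂ ω : ℤ) = k} =
      ENNReal.ofReal ((p / (2 - p)) * (1 - p) ^ k.natAbs) :=
  dg_of_diff_of_geometric_general μ p hp g₁ g₂ hg₁ hg₂ hindep hdist₁ hdist₂ k
end

section
/- Fix p ∈ (0,1) and set s = 2(1−p)/(p(2−p)). Let q : ℤ → [0,∞) be any probability mass function on ℤ that is symmetric (q(k) = q(−k) for all k ∈ ℤ) and has mean absolute deviation ∑_{k∈ℤ} |k| q(k) = s. Then the Shannon entropy of q does not exceed that of the double geometric distribution with parameter p: −∑_{k∈ℤ} q(k) log q(k) ≤ −∑_{k∈ℤ} q_p(k) log q_p(k), where q_p(k) = (p/(2−p))·(1−p)^{|k|}. That is, the double geometric distribution is the maximum-entropy symmetric distribution on ℤ for a given mean absolute deviation. -/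
/-!
Gibbs' inequality: for any pmf `q` with `∑ q = 1`, the cross entropy `-∑ q log q_p` dominates the
entropy `-∑ q log q`. Since `log q_p(k) = log (p / (2 - p)) + |k| log (1 - p)` is affine in `|k|`,
the cross entropy depends on `q` only through its mean absolute deviation, so it is the same for
`q` and for `q_p`, where it equals the entropy of `q_p`.
-/

open Real

theorem HasSum.comp_natAbs {G : Type*} [AddCommGroup G] [TopologicalSpace G]
    [IsTopologicalAddGroup G] {g : ℕ → G} {a : G} (h : HasSum g a) :
    HasSum (fun k : ℤ => g k.natAbs) (a + a - g 0) := by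
  simpa using HasSum.of_nat_of_neg (f := fun k : ℤ => g k.natAbs) (by simpa using h)
    (by simpa using h)

theorem sub_le_mul_log_sub_mul_log {x y : ℝ} (hx : 0 ≤ x) (hy : 0 < y) :
    x - y ≤ x * log x - x * log y := by
  rcases hx.eq_or_lt with rfl | hx
  · simpa using hy.le
  have h := one_sub_inv_le_log_of_pos (div_pos hx hy)
  rw [inv_div, log_div hx.ne' hy.ne'] at h
  calc x - y = x * (1 - y / x) := by field_simp
    _ ≤ x * (log x - log y) := by gcongr
    _ = x * log x - x * log y := by ring

/-- Gibbs' inequality. -/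
theorem tsum_mul_log_le_tsum_mul_log {ι : Type*} {q r : ι → ℝ} {a : ℝ}
    (hq_nonneg : ∀ i, 0 ≤ q i) (hr_pos : ∀ i, 0 < r i) (hq : HasSum q a) (hr : HasSum r a)
    (hqq : Summable fun i => q i * log (q i)) (hqr : Summable fun i => q i * log (r i)) :
    ∑' i, q i * log (r i) ≤ ∑' i, q i * log (q i) := by
  have h := hasSum_le (fun i => sub_le_mul_log_sub_mul_log (hq_nonneg i) (hr_pos i))
    (hq.sub hr) (hqq.hasSum.sub hqr.hasSum)
  linarith

noncomputable def doubleGeometric (p : ℝ) (k : ℤ) : ℝ :=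
  p / (2 - p) * (1 - p) ^ k.natAbs

section DoubleGeometric

variable {p : ℝ} (hp : p ∈ Set.Ioo (0 : ℝ) 1)
include hp

theorem doubleGeometric_pos (k : ℤ) : 0 < doubleGeometric p k := by
  obtain ⟨hp0, hp1⟩ := hp
  unfold doubleGeometric
  have : 0 < 1 - p := by linarith
  have : 0 < 2 - p := by linarith
  positivity

theorem hasSum_doubleGeometric : HasSum (doubleGeometric p) 1 := by
  obtain ⟨hp0, hp1⟩ := hp
  have hgeom : HasSum (fun n : ℕ => (1 - p) ^ n) p⁻¹ := by
    simpa using hasSum_geometric_of_lt_one (by linarith) (by linarith : 1 - p < 1)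
  have hval : p / (2 - p) * (p⁻¹ + p⁻¹ - (1 - p) ^ 0) = 1 := by
    have : 2 - p ≠ 0 := by linarith
    field_simp
    ring
  exact hval ▸ hgeom.comp_natAbs.mul_left (p / (2 - p))

theorem hasSum_abs_mul_doubleGeometric :
    HasSum (fun k : ℤ => |(k : ℝ)| * doubleGeometric p k) (2 * (1 - p) / (p * (2 - p))) := by
  obtain ⟨hp0, hp1⟩ := hp
  have hmoment : HasSum (fun n : ℕ => n * (1 - p) ^ n) ((1 - p) / p ^ 2) := by
    have hnorm : ‖1 - p‖ < 1 := by rw [Real.norm_eq_abs, abs_lt]; constructor <;> linarith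
    simpa using hasSum_coe_mul_geometric_of_norm_lt_one hnorm
  have hval : p / (2 - p) * ((1 - p) / p ^ 2 + (1 - p) / p ^ 2 - (0 : ℕ) * (1 - p) ^ 0) =
      2 * (1 - p) / (p * (2 - p)) := by
    have : 2 - p ≠ 0 := by linarith
    field_simp
    ring
  refine hval ▸ (hmoment.comp_natAbs.mul_left (p / (2 - p))).congr_fun fun k => ?_
  rw [doubleGeometric, ← Int.cast_abs, ← Nat.cast_natAbs]
  ring

theorem log_doubleGeometric (k : ℤ) :
    log (doubleGeometric p k) = log (p / (2 - p)) + |(k : ℝ)| * log (1 - p) := by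
  obtain ⟨hp0, hp1⟩ := hp
  have : 0 < 2 - p := by linarith
  rw [doubleGeometric, log_mul (by positivity) (pow_ne_zero _ (by linarith)), log_pow,
    Nat.cast_natAbs, Int.cast_abs]

theorem hasSum_mul_log_doubleGeometric {q : ℤ → ℝ} {a s : ℝ} (hq : HasSum q a)
    (hq_mad : HasSum (fun k : ℤ => |(k : ℝ)| * q k) s) :
    HasSum (fun k => q k * log (doubleGeometric p k)) (a * log (p / (2 - p)) + s * log (1 - p)) := by
  refine ((hq.mul_right (log (p / (2 - p)))).add (hq_mad.mul_right (log (1 - p)))).congr_fun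
    fun k => ?_
  rw [log_doubleGeometric hp]
  ring

theorem entropy_doubleGeometric :
    -∑' k, doubleGeometric p k * log (doubleGeometric p k) =
      -(log (p / (2 - p)) + 2 * (1 - p) / (p * (2 - p)) * log (1 - p)) := by
  rw [(hasSum_mul_log_doubleGeometric hp (hasSum_doubleGeometric hp)
    (hasSum_abs_mul_doubleGeometric hp)).tsum_eq, one_mul]

theorem entropy_doubleGeometric_nonneg :
    0 ≤ -∑' k, doubleGeometric p k * log (doubleGeometric p k) := by
  rw [entropy_doubleGeometric hp]
  obtain ⟨hp0, hp1⟩ := hp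
  have : 0 < 2 - p := by linarith
  have hc : log (p / (2 - p)) ≤ 0 := log_nonpos (by positivity) ((div_le_one this).2 (by linarith))
  have ht : log (1 - p) ≤ 0 := log_nonpos (by linarith) (by linarith)
  have hs : 0 ≤ 2 * (1 - p) / (p * (2 - p)) := div_nonneg (by linarith) (by positivity)
  nlinarith

end DoubleGeometric

theorem dg_max_entropy_general (p : ℝ) (hp : p ∈ Set.Ioo (0 : ℝ) 1)
    (s : ℝ) (hs : s = 2 * (1 - p) / (p * (2 - p)))
    (q : ℤ → ℝ) (hq_nonneg : ∀ k, 0 ≤ q k)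
    (hq_sum : ∑' k : ℤ, q k = 1)
    (hq_mad_summable : Summable fun k : ℤ => |(k : ℝ)| * q k)
    (hq_mad : ∑' k : ℤ, |(k : ℝ)| * q k = s) :
    -∑' k : ℤ, q k * Real.log (q k) ≤
      -∑' k : ℤ,
          ((p / (2 - p)) * (1 - p) ^ k.natAbs) *
            Real.log ((p / (2 - p)) * (1 - p) ^ k.natAbs) := by
  change _ ≤ -∑' k, doubleGeometric p k * log (doubleGeometric p k)
  by_cases hqq : Summable fun k => q k * log (q k)
  · have hq : HasSum q 1 := by
      have : Summable q := by
        by_contra h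
        simp [tsum_eq_zero_of_not_summable h] at hq_sum
      exact hq_sum ▸ this.hasSum
    have hcross := hasSum_mul_log_doubleGeometric hp hq (hq_mad ▸ hq_mad_summable.hasSum)
    have hgibbs := tsum_mul_log_le_tsum_mul_log hq_nonneg (doubleGeometric_pos hp) hq
      (hasSum_doubleGeometric hp) hqq hcross.summable
    rw [entropy_doubleGeometric hp, ← hs, ← one_mul (log (p / (2 - p))), ← hcross.tsum_eq]
    linarith
  · -- the entropy of `q` is then `0` by the `tsum` convention
    rw [tsum_eq_zero_of_not_summable hqq, neg_zero]
    exact entropy_doubleGeometric_nonneg hp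

/-- The double geometric distribution is the maximum-entropy symmetric
distribution on `ℤ` for a given mean absolute deviation. -/
theorem dg_max_entropy (p : ℝ) (hp : p ∈ Set.Ioo (0 : ℝ) 1)
    (s : ℝ) (hs : s = 2 * (1 - p) / (p * (2 - p)))
    (q : ℤ → ℝ) (hq_nonneg : ∀ k, 0 ≤ q k)
    (hq_symm : ∀ k : ℤ, q k = q (-k))
    (hq_sum : ∑' k : ℤ, q k = 1)
    (hq_mad_summable : Summable fun k : ℤ => |(k : ℝ)| * q k)
    (hq_mad : ∑' k : ℤ, |(k : ℝ)| * q k = s) :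
    -∑' k : ℤ, q k * Real.log (q k) ≤
      -∑' k : ℤ,
          ((p / (2 - p)) * (1 - p) ^ k.natAbs) *
            Real.log ((p / (2 - p)) * (1 - p) ^ k.natAbs) :=
  dg_max_entropy_general p hp s hs q hq_nonneg hq_sum hq_mad_summable hq_mad
end

section
/- Let n be a positive integer and let A : ℝⁿ → ℝⁿ be a linear map that preserves the ℓ₁-norm, i.e., ‖Ax‖₁ = ‖x‖₁ for all x ∈ ℝⁿ. Then A is a signed coordinate permutation: there exist a permutation σ of {1,…,n} and signs ε ∈ {−1,+1}ⁿ such that A e_j = ε_j · e_{σ(j)} for every standard basis vector e_j. Hence the only ℓ₁-norm-preserving linear transformations are compositions of coordinate permutations and coordinate sign changes. -/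
/-!
Test `A` on `e_j ± e_k`. Since `|a + b| + |a - b| ≤ 2 (|a| + |b|)` with equality only when
`a = 0` or `b = 0`, and `A e_j ± A e_k` both have ℓ₁-norm `2 = ‖A e_j‖₁ + ‖A e_k‖₁`, the images
of distinct basis vectors have disjoint supports. So `n` nonempty, pairwise disjoint supports
sit inside `n` coordinates: each is a single coordinate `σ j`, with `σ` a permutation, and the
entry there has absolute value `‖A e_j‖₁ = 1`.
-/

open Finset

theorem eq_zero_or_eq_zero_of_abs_add_add_abs_sub_eq {a b : ℝ}
    (h : |a + b| + |a - b| = 2 * (|a| + |b|)) : a = 0 ∨ b = 0 := by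
  rcases abs_cases a with ⟨ha, _⟩ | ⟨ha, _⟩ <;> rcases abs_cases b with ⟨hb, _⟩ | ⟨hb, _⟩ <;>
    rcases abs_cases (a + b) with ⟨hab, _⟩ | ⟨hab, _⟩ <;>
    rcases abs_cases (a - b) with ⟨hab', _⟩ | ⟨hab', _⟩ <;>
    first | (left; linarith) | (right; linarith)

section

variable {ι κ : Type*} [Fintype ι] [DecidableEq ι]

theorem sum_abs_single (j : ι) (a : ℝ) : ∑ i, |Pi.single j a i| = |a| := by
  simp [Pi.single_apply, apply_ite abs]

theorem sum_abs_single_add_single {j k : ι} (hjk : j ≠ k) (a b : ℝ) :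
    ∑ i, |(Pi.single j a + Pi.single k b : ι → ℝ) i| = |a| + |b| := by
  have hsplit : ∀ i, |(Pi.single j a + Pi.single k b : ι → ℝ) i|
      = |(Pi.single j a : ι → ℝ) i| + |(Pi.single k b : ι → ℝ) i| := by
    intro i
    by_cases hij : i = j <;> by_cases hik : i = k <;> simp_all
  simp only [hsplit, sum_add_distrib, sum_abs_single]

theorem apply_single_eq_zero_or_of_sum_abs_eq [Fintype κ] (A : (ι → ℝ) →ₗ[ℝ] (κ → ℝ))
    (hA : ∀ x, ∑ i, |A x i| = ∑ i, |x i|) {j k : ι} (hjk : j ≠ k) (i : κ) :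
    A (Pi.single j 1) i = 0 ∨ A (Pi.single k 1) i = 0 := by
  set u := A (Pi.single j 1)
  set w := A (Pi.single k 1)
  have hu : ∑ i, |u i| = 1 := by rw [hA, sum_abs_single, abs_one]
  have hw : ∑ i, |w i| = 1 := by rw [hA, sum_abs_single, abs_one]
  have hadd : ∑ i, |u i + w i| = 2 := by
    have := hA (Pi.single j 1 + Pi.single k 1)
    rw [sum_abs_single_add_single hjk, map_add] at this
    simpa [one_add_one_eq_two] using this
  have hsub : ∑ i, |u i - w i| = 2 := by
    have := hA (Pi.single j 1 + Pi.single k (-1))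
    rw [sum_abs_single_add_single hjk, Pi.single_neg, map_add, map_neg] at this
    simpa [one_add_one_eq_two, sub_eq_add_neg] using this
  have hle : ∀ i ∈ univ, |u i + w i| + |u i - w i| ≤ 2 * (|u i| + |w i|) := fun i _ => by
    linarith [abs_add_le (u i) (w i), abs_sub (u i) (w i)]
  have hsum : ∑ i, (|u i + w i| + |u i - w i|) = ∑ i, 2 * (|u i| + |w i|) := by
    rw [sum_add_distrib, ← mul_sum, sum_add_distrib, hadd, hsub, hu, hw]
    norm_num
  exact eq_zero_or_eq_zero_of_abs_add_add_abs_sub_eq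
    ((sum_eq_sum_iff_of_le hle).1 hsum i (mem_univ i))

end

theorem exists_perm_forall_ne_zero_iff {ι M : Type*} [Finite ι] [Zero M] (v : ι → ι → M)
    (hv : ∀ j, v j ≠ 0) (hdisj : Pairwise fun j k => ∀ i, v j i = 0 ∨ v k i = 0) :
    ∃ σ : Equiv.Perm ι, ∀ j i, v j i ≠ 0 ↔ i = σ j := by
  choose f hf using fun j => Function.ne_iff.1 (hv j)
  have hf_unique : ∀ j k, v j (f k) ≠ 0 → j = k := fun j k hjk => by
    by_contra hne
    exact (hdisj hne (f k)).elim hjk (hf k)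
  have hinj : Function.Injective f := fun j k h => hf_unique j k (h ▸ hf j)
  refine ⟨Equiv.ofBijective f hinj.bijective_of_finite, fun j i => ⟨fun hji => ?_, ?_⟩⟩
  · obtain ⟨k, rfl⟩ := hinj.bijective_of_finite.surjective i
    rw [hf_unique j k hji]
    rfl
  · rintro rfl
    exact hf j

theorem eq_single_of_forall_ne_zero_iff {ι M : Type*} [DecidableEq ι] [Zero M] {v : ι → M}
    {a : ι} (h : ∀ i, v i ≠ 0 ↔ i = a) : v = Pi.single a (v a) := by
  funext i
  by_cases hi : i = a
  · subst hi
    simp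
  · rw [Pi.single_eq_of_ne hi]
    exact not_not.1 (mt (h i).1 hi)

theorem l1_isometry_is_signed_perm_general (n : ℕ)
    (A : (Fin n → ℝ) →ₗ[ℝ] (Fin n → ℝ))
    (hA : ∀ x : Fin n → ℝ, ∑ i, |A x i| = ∑ i, |x i|) :
    ∃ (σ : Equiv.Perm (Fin n)) (ε : Fin n → ℝ),
      (∀ i, ε i = 1 ∨ ε i = -1) ∧
      ∀ j : Fin n, A (Pi.single j 1) = ε j • (Pi.single (σ j) 1 : Fin n → ℝ) := by
  have hnorm : ∀ j, ∑ i, |A (Pi.single j 1) i| = 1 := fun j => by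
    rw [hA, sum_abs_single, abs_one]
  have hne : ∀ j, A (Pi.single j 1) ≠ 0 := fun j h => by simpa [h] using hnorm j
  obtain ⟨σ, hσ⟩ := exists_perm_forall_ne_zero_iff (fun j => A (Pi.single j 1)) hne
    fun j k hjk => apply_single_eq_zero_or_of_sum_abs_eq A hA hjk
  set ε : Fin n → ℝ := fun j => A (Pi.single j 1) (σ j)
  have hA_single : ∀ j, A (Pi.single j 1) = Pi.single (σ j) (ε j) := fun j =>
    eq_single_of_forall_ne_zero_iff (hσ j)
  refine ⟨σ, ε, fun j => ?_, fun j => ?_⟩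
  · have := hnorm j
    rw [hA_single j, sum_abs_single] at this
    exact (abs_eq zero_le_one).1 this
  · rw [hA_single j, ← Pi.single_smul', smul_eq_mul, mul_one]

/-- Any linear map on `ℝⁿ` preserving the ℓ₁-norm is a signed coordinate
permutation: it sends each standard basis vector to a signed standard basis
vector. -/
theorem l1_isometry_is_signed_perm (n : ℕ) (hn : 0 < n)
    (A : (Fin n → ℝ) →ₗ[ℝ] (Fin n → ℝ))
    (hA : ∀ x : Fin n → ℝ, ∑ i, |A x i| = ∑ i, |x i|) :
    ∃ (σ : Equiv.Perm (Fin n)) (ε : Fin n → ℝ),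
      (∀ i, ε i = 1 ∨ ε i = -1) ∧
      ∀ j : Fin n, A (Pi.single j 1) = ε j • (Pi.single (σ j) 1 : Fin n → ℝ) :=
  l1_isometry_is_signed_perm_general n A hA
end
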